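/- arXiv:1910.00559 — 2 statements merged into one kernel-verified Lean document; each statement's English description precedes it below -/
import Mathlib

section
/- Let π : G → H be a surjective group homomorphism and ν ∈ Z²(G; k×) a 2-cocycle such that ν(g, g') = 1 whenever g' ∈ ker π, and ν(g', g) = 1 whenever g' ∈ ker π. Then for any set-theoretic section s : H → G of π, the function ξ(h,h') := ν(s(h), s(h')) is a well-defined 2-cocycle on H (independent of the choice of section) satisfying π*ξ = ν, i.e. ν(g,g') = ξ(π(g), π(g')) for all g,g' ∈ G. -/
/-- If `ν` is a 2-cocycle on `G` (with values in `k×`) which is trivial whenever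
one of the two arguments lies in the kernel of a surjection `π : G → H`, then
`ξ(h,h') := ν(s h, s h')` (for a set-theoretic section `s` of `π`) is a
well-defined 2-cocycle on `H`, independent of the choice of section, with
`π*ξ = ν`. -/
theorem cocycle_descends_along_surjection
    {G H : Type*} [Group G] [Group H] {k : Type*} [Field k]
    (π : G →* H) (hsurj : Function.Surjective π)
    (ν : G → G → kˣ)
    (hcoc : ∀ g₁ g₂ g₃ : G, ν g₁ g₂ * ν (g₁ * g₂) g₃ = ν g₂ g₃ * ν g₁ (g₂ * g₃))
    (hr : ∀ g g' : G, g' ∈ MonoidHom.ker π → ν g g' = 1)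
    (hl : ∀ g g' : G, g' ∈ MonoidHom.ker π → ν g' g = 1)
    (s : H → G) (hs : ∀ h, π (s h) = h) :
    (∀ h₁ h₂ h₃ : H,
        ν (s h₁) (s h₂) * ν (s (h₁ * h₂)) (s h₃)
          = ν (s h₂) (s h₃) * ν (s h₁) (s (h₂ * h₃))) ∧
    (∀ s' : H → G, (∀ h, π (s' h) = h) →
        ∀ h h' : H, ν (s' h) (s' h') = ν (s h) (s h')) ∧
    (∀ g g' : G, ν g g' = ν (s (π g)) (s (π g'))) := by
  -- right multiplication of second argument by a kernel element
  have key1 : ∀ (g g' a : G), a ∈ MonoidHom.ker π → ν g (g' * a) = ν g g' := by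
    intro g g' a ha
    have := hcoc g g' a
    rw [hr (g * g') a ha, hr g' a ha, one_mul, mul_one] at this
    exact this.symm
  -- left multiplication of second argument by a kernel element
  have key3 : ∀ (g g' a : G), a ∈ MonoidHom.ker π → ν g (a * g') = ν g g' := by
    intro g g' a ha
    have hmem : g'⁻¹ * a * g' ∈ MonoidHom.ker π := by
      simp [MonoidHom.mem_ker] at ha ⊢
      simp [ha]
    have heq : a * g' = g' * (g'⁻¹ * a * g') := by group
    rw [heq, key1 g g' _ hmem]
  -- right multiplication of first argument by a kernel element
  have key4 : ∀ (g g' a : G), a ∈ MonoidHom.ker π → ν (g * a) g' = ν g g' := by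
    intro g g' a ha
    have := hcoc g a g'
    rw [hr g a ha, hl g' a ha, one_mul, one_mul] at this
    rw [this, key3 g g' a ha]
  -- ν only depends on π-images
  have claim3 : ∀ g g' : G, ν g g' = ν (s (π g)) (s (π g')) := by
    intro g g'
    have ha : (s (π g))⁻¹ * g ∈ MonoidHom.ker π := by
      simp [MonoidHom.mem_ker, hs]
    have ha' : (s (π g'))⁻¹ * g' ∈ MonoidHom.ker π := by
      simp [MonoidHom.mem_ker, hs]
    have hg : g = s (π g) * ((s (π g))⁻¹ * g) := by group
    have hg' : g' = s (π g') * ((s (π g'))⁻¹ * g') := by group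
    conv_lhs => rw [hg, hg']
    rw [key4 _ _ _ ha, key1 _ _ _ ha']
  refine ⟨?_, ?_, claim3⟩
  · intro h₁ h₂ h₃
    have e1 : ν (s (h₁ * h₂)) (s h₃) = ν (s h₁ * s h₂) (s h₃) := by
      rw [claim3 (s h₁ * s h₂) (s h₃)]
      simp [hs]
    have e2 : ν (s h₁) (s (h₂ * h₃)) = ν (s h₁) (s h₂ * s h₃) := by
      rw [claim3 (s h₁) (s h₂ * s h₃)]
      simp [hs]
    rw [e1, e2]
    exact hcoc (s h₁) (s h₂) (s h₃)
  · intro s' hs' h h'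
    rw [claim3 (s' h) (s' h'), hs' h, hs' h']
end

section
/- Let Γ be a groupoid. For each n ≥ 0, there is a bijection between the set of strings of n composable morphisms in the loop groupoid ΛΓ (i.e. n-simplices of the nerve of ΛΓ) and the set of loops of n+1 composable morphisms in Γ, i.e. tuples (x₀ →^{φ₀} x₁ → ⋯ → xₙ →^{ψ} x₀) of morphisms in Γ. Moreover, this bijection is compatible with face and degeneracy maps, giving an isomorphism of simplicial sets from the nerve of ΛΓ to the cyclic bar construction of Γ. -/
/-!
The automorphisms on a string `x₀ → ⋯ → xₙ` in `ΛΓ` are determined by `α₀`: the commutation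
squares force `αᵢ` to be the conjugate of `α₀` along `x₀ → xᵢ`. Recording `α₀` as the loop-back
morphism `ψ = (x₀ → xₙ)⁻¹ ≫ α₀` therefore loses nothing, and `αᵢ` is recovered by going once
around the loop starting at `xᵢ`. Compatibility with a simplicial operator `f : [m] → [n]` is the
identity `(x_{f m} → xₙ) ≫ ψ ≫ (x₀ → x_{f 0}) = (x_{f 0} → x_{f m})⁻¹ ≫ α_{f 0}`, which is again
conjugation of `α₀`.
-/

open CategoryTheory

universe v u

variable (Γ : Type u) [Groupoid.{v} Γ]

/-- The loop groupoid `ΛΓ` of a groupoid `Γ`: objects are pairs `(x, α)` of an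
object `x` of `Γ` and an automorphism `α` of `x`; morphisms
`(x, α) → (x', α')` are morphisms `f : x → x'` of `Γ` with `α ≫ f = f ≫ α'`. -/
structure LoopObj where
  pt : Γ
  aut : pt ⟶ pt

instance LoopObj.category : Category (LoopObj Γ) where
  Hom x y := { f : x.pt ⟶ y.pt // x.aut ≫ f = f ≫ y.aut }
  id x := ⟨𝟙 x.pt, by simp⟩
  comp {a b c} f g := ⟨f.1 ≫ g.1, by
    rw [← Category.assoc, f.2, Category.assoc, g.2, Category.assoc]⟩
  id_comp f := Subtype.ext (by simp)
  comp_id f := Subtype.ext (by simp)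
  assoc f g h := Subtype.ext (by simp)

/-- The forgetful functor `ΛΓ ⥤ Γ`. -/
def forgetLoop : LoopObj Γ ⥤ Γ where
  obj x := x.pt
  map f := f.1

/-- The set of `n`-simplices of the cyclic bar construction of `Γ`: a string of
`n` composable morphisms `x₀ → x₁ → ⋯ → xₙ` in `Γ` together with a loop-back
morphism `ψ : xₙ → x₀`. -/
def CycBarObj (n : ℕ) : Type (max u v) :=
  Σ' F : ComposableArrows Γ n, F.obj (Fin.last n) ⟶ F.obj 0

/-- The simplicial structure maps of the cyclic bar construction of `Γ`. -/
def cycBarMap {m n : ℕ} (f : SimplexCategory.mk m ⟶ SimplexCategory.mk n)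
    (x : CycBarObj Γ n) : CycBarObj Γ m :=
  ⟨x.1.whiskerLeft (SimplexCategory.toCat.map f).toFunctor,
    x.1.map (homOfLE (Fin.le_last ((SimplexCategory.toCat.map f).toFunctor.obj (Fin.last m)))) ≫
      x.2 ≫ x.1.map (homOfLE (Fin.zero_le ((SimplexCategory.toCat.map f).toFunctor.obj (Fin.mk 0 (Nat.succ_pos m)))))⟩

variable {Γ}

namespace LoopObj

@[simp] lemma comp_val {X Y Z : LoopObj Γ} (f : X ⟶ Y) (g : Y ⟶ Z) :
    (f ≫ g).1 = f.1 ≫ g.1 := rfl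

@[simp] lemma eqToHom_val {X Y : LoopObj Γ} (h : X = Y) :
    (eqToHom h).1 = eqToHom (congrArg LoopObj.pt h) := by
  subst h; rfl

end LoopObj

lemma comp_inv_comp_comp_of_comm {C : Type*} [Groupoid C] {a b c d : C} {α : a ⟶ a} {β : b ⟶ b}
    {p : a ⟶ b} {q : b ⟶ c} {r : c ⟶ d} {s : a ⟶ d} (hs : s = p ≫ q ≫ r) (h : α ≫ p = p ≫ β) :
    r ≫ (inv s ≫ α) ≫ p = inv q ≫ β := by
  simp [hs, h]

/-- The loop `(f₀, …, f_{n-1}, (f_{n-1} ⋯ f₀)⁻¹ α₀)` of a string in `ΛΓ`. -/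
noncomputable def toCycBarObj {n : ℕ} (x : ComposableArrows (LoopObj Γ) n) : CycBarObj Γ n :=
  ⟨x ⋙ forgetLoop Γ,
    inv ((x ⋙ forgetLoop Γ).map (homOfLE (Fin.zero_le (Fin.last n)))) ≫ (x.obj 0).aut⟩

/-- The automorphism of `xᵢ` obtained by going once around the loop `y` starting at `xᵢ`. -/
def CycBarObj.autAt {n : ℕ} (y : CycBarObj Γ n) (i : Fin (n + 1)) : y.1.obj i ⟶ y.1.obj i :=
  y.1.map (homOfLE (Fin.le_last i)) ≫ y.2 ≫ y.1.map (homOfLE (Fin.zero_le i))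

lemma CycBarObj.autAt_comp_map {n : ℕ} (y : CycBarObj Γ n) {i j : Fin (n + 1)} (g : i ⟶ j) :
    y.autAt i ≫ y.1.map g = y.1.map g ≫ y.autAt j := by
  have h₀ : y.1.map (homOfLE (Fin.zero_le i)) ≫ y.1.map g = y.1.map (homOfLE (Fin.zero_le j)) := by
    rw [← Functor.map_comp]; rfl
  have h₁ : y.1.map g ≫ y.1.map (homOfLE (Fin.le_last j)) = y.1.map (homOfLE (Fin.le_last i)) := by
    rw [← Functor.map_comp]; rfl
  simp only [CycBarObj.autAt, Category.assoc, h₀, reassoc_of% h₁]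

def ofCycBarObj {n : ℕ} (y : CycBarObj Γ n) : ComposableArrows (LoopObj Γ) n where
  obj i := ⟨y.1.obj i, y.autAt i⟩
  map g := ⟨y.1.map g, y.autAt_comp_map g⟩
  map_id i := Subtype.ext (y.1.map_id i)
  map_comp g h := Subtype.ext (y.1.map_comp g h)

lemma toCycBarObj_map_comp_comp_map {n : ℕ} (x : ComposableArrows (LoopObj Γ) n)
    {z w : Fin (n + 1)} (h : z ≤ w) :
    (toCycBarObj x).1.map (homOfLE (Fin.le_last w)) ≫ (toCycBarObj x).2 ≫
        (toCycBarObj x).1.map (homOfLE (Fin.zero_le z)) =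
      inv ((toCycBarObj x).1.map (homOfLE h)) ≫ (x.obj z).aut := by
  set G := x ⋙ forgetLoop Γ
  have hsplit : G.map (homOfLE (Fin.zero_le (Fin.last n))) =
      G.map (homOfLE (Fin.zero_le z)) ≫ G.map (homOfLE h) ≫ G.map (homOfLE (Fin.le_last w)) := by
    rw [← Functor.map_comp, ← Functor.map_comp]; rfl
  have hcomm : (x.obj 0).aut ≫ G.map (homOfLE (Fin.zero_le z)) =
      G.map (homOfLE (Fin.zero_le z)) ≫ (x.obj z).aut :=
    (x.map (homOfLE (Fin.zero_le z))).2
  exact comp_inv_comp_comp_of_comm hsplit hcomm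

lemma toCycBarObj_autAt {n : ℕ} (x : ComposableArrows (LoopObj Γ) n) (i : Fin (n + 1)) :
    (toCycBarObj x).autAt i = (x.obj i).aut := by
  rw [CycBarObj.autAt, toCycBarObj_map_comp_comp_map x le_rfl]
  simp only [homOfLE_refl, CategoryTheory.Functor.map_id, IsIso.inv_id]
  exact Category.id_comp (x.obj i).aut

lemma ofCycBarObj_toCycBarObj {n : ℕ} (x : ComposableArrows (LoopObj Γ) n) :
    ofCycBarObj (toCycBarObj x) = x := by
  have hobj (i : Fin (n + 1)) : (ofCycBarObj (toCycBarObj x)).obj i = x.obj i := by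
    change LoopObj.mk _ ((toCycBarObj x).autAt i) = ⟨(x.obj i).pt, (x.obj i).aut⟩
    rw [toCycBarObj_autAt]
    rfl
  refine CategoryTheory.Functor.ext hobj fun i j g => Subtype.ext ?_
  simp only [LoopObj.comp_val, LoopObj.eqToHom_val]
  simp only [toCycBarObj, forgetLoop, Functor.comp_obj, homOfLE_leOfHom, Functor.comp_map,
    ofCycBarObj, eqToHom_naturality, eqToHom_refl, Category.id_comp]
  exact (Category.id_comp (x.map g).1).symm

lemma toCycBarObj_ofCycBarObj {n : ℕ} (y : CycBarObj Γ n) : toCycBarObj (ofCycBarObj y) = y := by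
  obtain ⟨G, ψ⟩ := y
  refine congrArg (PSigma.mk G) ?_
  change inv (G.map (homOfLE (Fin.zero_le (Fin.last n)))) ≫
    G.map (homOfLE (Fin.zero_le (Fin.last n))) ≫ ψ ≫ G.map (𝟙 0) = ψ
  simp

noncomputable def nerveLoopObjEquiv (n : ℕ) :
    (nerve (LoopObj Γ)).obj (Opposite.op (SimplexCategory.mk n)) ≃ CycBarObj Γ n where
  toFun := toCycBarObj
  invFun := ofCycBarObj
  left_inv := ofCycBarObj_toCycBarObj
  right_inv := toCycBarObj_ofCycBarObj

lemma toCycBarObj_whiskerLeft {m n : ℕ} (f : SimplexCategory.mk m ⟶ SimplexCategory.mk n)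
    (x : ComposableArrows (LoopObj Γ) n) :
    toCycBarObj (x.whiskerLeft (SimplexCategory.toCat.map f).toFunctor) =
      cycBarMap Γ f (toCycBarObj x) := by
  refine congrArg (PSigma.mk _) ?_
  exact (toCycBarObj_map_comp_comp_map x (f.toOrderHom.monotone (Fin.zero_le (Fin.last m)))).symm

/-- The nerve of the loop groupoid `ΛΓ` of a groupoid `Γ` is isomorphic, as a
simplicial set, to the cyclic bar construction of `Γ`: in each level there is a
bijection between strings of `n` composable morphisms in `ΛΓ` and loops of
`n + 1` composable morphisms in `Γ`, compatible with all simplicial structure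
maps, and identifying the underlying string of objects and morphisms via the
forgetful functor `ΛΓ ⥤ Γ`. -/
theorem nerve_loopGroupoid_iso_cyclicBar :
    ∃ e : ∀ n : ℕ,
        ((nerve (LoopObj Γ)).obj (Opposite.op (SimplexCategory.mk n))) ≃ CycBarObj Γ n,
      (∀ (n : ℕ) (x : (nerve (LoopObj Γ)).obj (Opposite.op (SimplexCategory.mk n))),
          (e n x).1 = x ⋙ forgetLoop Γ) ∧
      (∀ (m n : ℕ) (f : SimplexCategory.mk m ⟶ SimplexCategory.mk n)
          (x : (nerve (LoopObj Γ)).obj (Opposite.op (SimplexCategory.mk n))),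
        e m ((nerve (LoopObj Γ)).map f.op x) = cycBarMap Γ f (e n x)) :=
  ⟨nerveLoopObjEquiv, fun _ _ => rfl, fun _ _ f x => toCycBarObj_whiskerLeft f x⟩
end
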